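/- Fix integers d ≥ 1, H ≥ 1, a gradient threshold θ > 0, and a degree bound Δ ≥ 2. Let Π be the set of instances (x, f) with x ∈ ℝ^d and f : ℝ^d → ℝ a real polynomial of degree at most Δ, and for η ≥ 0 let ℓ_η : Π → {1, …, H} be the gradient-descent cost ℓ_η(x, f) = ℓ(η, x, f). Then there is a universal constant C such that the pseudo-dimension of the class L = {ℓ_η : η ∈ ℝ_{≥0}} is at most C·H·log Δ. -/

import Mathlib

/-- Gradient-descent iterates: `gdIter f x η i` is the `(i+1)`-st iterate `x_{i+1}`,
so `gdIter f x η 0 = x₁ = x` and `x_{i+1} = x_i - η ∇f(x_i)`. -/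
noncomputable def gdIter {d : ℕ} (f : EuclideanSpace ℝ (Fin d) → ℝ)
    (x : EuclideanSpace ℝ (Fin d)) (η : ℝ) : ℕ → EuclideanSpace ℝ (Fin d)
  | 0 => x
  | i + 1 => gdIter f x η i - η • gradient f (gdIter f x η i)

/-- Gradient-descent cost: the smallest `i ∈ {1,…,H}` with `‖∇f(x_i)‖ < θ` if it exists,
and `H` otherwise. -/
noncomputable def gdCost {d : ℕ} (H : ℕ) (θ : ℝ) (f : EuclideanSpace ℝ (Fin d) → ℝ)
    (x : EuclideanSpace ℝ (Fin d)) (η : ℝ) : ℕ :=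
  sInf ({i | 1 ≤ i ∧ i ≤ H ∧ ‖gradient f (gdIter f x η (i - 1))‖ < θ} ∪ {H})

/-- `f : ℝ^d → ℝ` is a real polynomial of (total) degree at most `Δ`. -/
def IsPolyDeg {d : ℕ} (Δ : ℕ) (f : EuclideanSpace ℝ (Fin d) → ℝ) : Prop :=
  ∃ P : MvPolynomial (Fin d) ℝ, P.totalDegree ≤ Δ ∧
    ∀ y : EuclideanSpace ℝ (Fin d), f y = MvPolynomial.eval (fun j => y j) P

/-- A class `F` of real-valued functions on `X` pseudo-shatters a finite set `S`. -/
def PseudoShatters {X : Type*} (F : Set (X → ℝ)) (S : Finset X) : Prop :=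
  ∃ r : X → ℝ, ∀ b : X → Bool, ∃ f ∈ F, ∀ z ∈ S, (f z > r z ↔ b z = true)

/-!
For a polynomial `f` of degree at most `Δ`, the coordinates of the `i`-th gradient-descent
iterate are polynomials in the step size `η` of degree at most `(2Δ)^i`, so the test
`‖∇f(xᵢ)‖ < θ` is the sign of a polynomial `‖∇f(xᵢ(η))‖² - θ²` in `η` of degree at most
`(2Δ)^(i+1)`, and the cost is a function of these signs. The `mH` polynomials attached to `m`
instances have at most `mH(2Δ)^H` roots, which cut `ℝ` into at most `2(mH(2Δ)^H + 1)` cells on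
each of which every cost is constant. Pseudo-shattering `m` instances needs `2^m` distinct cost
patterns, so `2^m ≤ 2(mH(2Δ)^H + 1)`, which forces `m = O(H log Δ)`.
-/

open MvPolynomial
open scoped Polynomial

namespace MvPolynomial

variable {σ R : Type*} [CommSemiring R]

theorem totalDegree_pderiv_le (P : MvPolynomial σ R) (j : σ) :
    (pderiv j P).totalDegree ≤ P.totalDegree := by
  conv_lhs => rw [P.as_sum, map_sum]
  refine totalDegree_finsetSum_le fun s hs => ?_
  rw [pderiv_monomial]
  refine (totalDegree_monomial_le _ _).trans (le_trans ?_ (le_totalDegree hs))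
  exact (Finset.sum_le_sum_of_subset Finsupp.support_tsub).trans
    (Finset.sum_le_sum fun i _ => tsub_le_self)

theorem natDegree_aeval_le {q : σ → R[X]} {D : ℕ} (hq : ∀ j, (q j).natDegree ≤ D)
    (P : MvPolynomial σ R) : (aeval q P).natDegree ≤ P.totalDegree * D := by
  rw [aeval_def, eval₂_eq]
  refine Polynomial.natDegree_sum_le_of_forall_le _ _ fun s hs => ?_
  refine Polynomial.natDegree_mul_le.trans ?_
  rw [Polynomial.algebraMap_eq, Polynomial.natDegree_C, zero_add]
  refine (Polynomial.natDegree_prod_le _ _).trans ?_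
  calc ∑ i ∈ s.support, (q i ^ s i).natDegree ≤ ∑ i ∈ s.support, s i * D :=
        Finset.sum_le_sum fun i _ => Polynomial.natDegree_pow_le.trans (by gcongr; exact hq i)
    _ ≤ P.totalDegree * D := by rw [← Finset.sum_mul]; gcongr; exact le_totalDegree hs

theorem polynomial_eval_aeval (q : σ → R[X]) (P : MvPolynomial σ R) (η : R) :
    (aeval q P).eval η = eval (fun j => (q j).eval η) P := by
  rw [aeval_def, polynomial_eval_eval₂, eval]
  congr
  ext
  simp

theorem natDegree_aeval_pderiv_le {q : σ → R[X]} {D Δ : ℕ} (hq : ∀ j, (q j).natDegree ≤ D)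
    {P : MvPolynomial σ R} (hP : P.totalDegree ≤ Δ) (j : σ) :
    (aeval q (pderiv j P)).natDegree ≤ Δ * D :=
  (natDegree_aeval_le hq _).trans (Nat.mul_le_mul_right _ ((totalDegree_pderiv_le P j).trans hP))

theorem hasFDerivAt_eval [Fintype σ] (P : MvPolynomial σ ℝ) (y : EuclideanSpace ℝ σ) :
    HasFDerivAt (fun y : EuclideanSpace ℝ σ => eval (⇑y) P)
      (∑ j, eval (⇑y) (pderiv j P) • EuclideanSpace.proj (𝕜 := ℝ) j) y := by
  classical
  induction P using MvPolynomial.induction_on with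
  | C a => simpa using hasFDerivAt_const a y
  | add p q hp hq =>
    simp only [map_add]
    exact (hp.add hq).congr_fderiv (by simp only [Finset.sum_add_distrib, add_smul])
  | mul_X p n hp =>
    simp only [map_mul, eval_X]
    refine (hp.mul (EuclideanSpace.proj (𝕜 := ℝ) n).hasFDerivAt).congr_fderiv ?_
    simp [pderiv_X, Pi.single_apply, apply_ite (eval _), add_smul, mul_smul, Finset.smul_sum,
      Finset.sum_add_distrib]

theorem hasGradientAt_eval [Fintype σ] (P : MvPolynomial σ ℝ) (y : EuclideanSpace ℝ σ) :
    HasGradientAt (fun y : EuclideanSpace ℝ σ => eval (⇑y) P)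
      (WithLp.toLp 2 fun j => eval (⇑y) (pderiv j P)) y := by
  rw [hasGradientAt_iff_hasFDerivAt]
  refine (hasFDerivAt_eval P y).congr_fderiv ?_
  ext z
  simp [InnerProductSpace.toDual_apply_apply, PiLp.inner_apply, mul_comm]

end MvPolynomial

section GradientDescent

variable {d : ℕ}

noncomputable def gdIterPoly (P : MvPolynomial (Fin d) ℝ) (x : EuclideanSpace ℝ (Fin d)) :
    ℕ → Fin d → ℝ[X]
  | 0 => fun j => Polynomial.C (x j)
  | i + 1 => fun j => gdIterPoly P x i j - Polynomial.X * aeval (gdIterPoly P x i) (pderiv j P)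

noncomputable def gdStopPoly (P : MvPolynomial (Fin d) ℝ) (x : EuclideanSpace ℝ (Fin d)) (θ : ℝ)
    (i : ℕ) : ℝ[X] :=
  ∑ j, aeval (gdIterPoly P x i) (pderiv j P) ^ 2 - Polynomial.C (θ ^ 2)

theorem eval_gdIterPoly (P : MvPolynomial (Fin d) ℝ) (x : EuclideanSpace ℝ (Fin d)) (η : ℝ)
    (i : ℕ) : (fun j => (gdIterPoly P x i j).eval η) = ⇑(gdIter (fun y => eval (⇑y) P) x η i) := by
  induction i with
  | zero => funext j; simp [gdIterPoly, gdIter]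
  | succ i ih =>
    funext j
    simp [gdIterPoly, gdIter, polynomial_eval_aeval, ih, congrFun ih j,
      (hasGradientAt_eval P _).gradient]

theorem norm_gradient_gdIter_lt_iff (P : MvPolynomial (Fin d) ℝ) (x : EuclideanSpace ℝ (Fin d))
    {θ : ℝ} (hθ : 0 < θ) (η : ℝ) (i : ℕ) :
    ‖gradient (fun y : EuclideanSpace ℝ (Fin d) => eval (⇑y) P)
        (gdIter (fun y => eval (⇑y) P) x η i)‖ < θ ↔
      (gdStopPoly P x θ i).eval η < 0 := by
  rw [(hasGradientAt_eval P _).gradient, ← sq_lt_sq₀ (norm_nonneg _) hθ.le,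
    EuclideanSpace.real_norm_sq_eq]
  simp [gdStopPoly, Polynomial.eval_finsetSum, polynomial_eval_aeval, eval_gdIterPoly]

variable {Δ : ℕ} {P : MvPolynomial (Fin d) ℝ}

theorem natDegree_gdIterPoly_le (hΔ : 1 ≤ Δ) (hP : P.totalDegree ≤ Δ)
    (x : EuclideanSpace ℝ (Fin d)) (i : ℕ) (j : Fin d) :
    (gdIterPoly P x i j).natDegree ≤ (2 * Δ) ^ i := by
  induction i generalizing j with
  | zero => simp [gdIterPoly]
  | succ i ih =>
    have hstep := natDegree_aeval_pderiv_le ih hP j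
    have hpos : 1 ≤ (2 * Δ) ^ i := Nat.one_le_pow _ _ (by omega)
    refine (Polynomial.natDegree_sub_le _ _).trans (max_le ?_ ?_)
    · exact (ih j).trans (Nat.pow_le_pow_right (by omega) (by omega))
    · refine Polynomial.natDegree_mul_le.trans ?_
      rw [pow_succ]
      nlinarith [Polynomial.natDegree_X_le (R := ℝ)]

theorem natDegree_gdStopPoly_le (hΔ : 1 ≤ Δ) (hP : P.totalDegree ≤ Δ)
    (x : EuclideanSpace ℝ (Fin d)) (θ : ℝ) (i : ℕ) :
    (gdStopPoly P x θ i).natDegree ≤ (2 * Δ) ^ (i + 1) := by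
  refine (Polynomial.natDegree_sub_le _ _).trans (max_le ?_ (by simp))
  refine Polynomial.natDegree_sum_le_of_forall_le _ _ fun j _ => Polynomial.natDegree_pow_le.trans ?_
  have := natDegree_aeval_pderiv_le (natDegree_gdIterPoly_le hΔ hP x i) hP j
  rw [pow_succ]
  nlinarith

end GradientDescent

theorem gdCost_congr {d H : ℕ} {θ : ℝ} {f : EuclideanSpace ℝ (Fin d) → ℝ}
    {x : EuclideanSpace ℝ (Fin d)} {a b : ℝ}
    (h : ∀ i < H, (‖gradient f (gdIter f x a i)‖ < θ ↔ ‖gradient f (gdIter f x b i)‖ < θ)) :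
    gdCost H θ f x a = gdCost H θ f x b := by
  unfold gdCost
  congr 1
  ext i
  simp only [Set.mem_union, Set.mem_ofPred_eq, Set.mem_singleton_iff]
  refine or_congr (and_congr_right fun h1 => and_congr_right fun h2 => h (i - 1) (by omega)) Iff.rfl

theorem IsPolyDeg.exists_gdCost_eq_of_signs {d Δ : ℕ} {f : EuclideanSpace ℝ (Fin d) → ℝ}
    (hf : IsPolyDeg Δ f) (hΔ : 1 ≤ Δ) (x : EuclideanSpace ℝ (Fin d)) (H : ℕ) {θ : ℝ}
    (hθ : 0 < θ) :
    ∃ g : ℕ → ℝ[X], (∀ i < H, (g i).natDegree ≤ (2 * Δ) ^ H) ∧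
      ∀ a b : ℝ, (∀ i < H, ((g i).eval a < 0 ↔ (g i).eval b < 0)) →
        gdCost H θ f x a = gdCost H θ f x b := by
  obtain ⟨P, hP, hf⟩ := hf
  obtain rfl : f = fun y : EuclideanSpace ℝ (Fin d) => eval (⇑y) P := funext hf
  refine ⟨gdStopPoly P x θ, fun i hi => ?_, fun a b hab => gdCost_congr fun i hi => ?_⟩
  · exact (natDegree_gdStopPoly_le hΔ hP x θ i).trans (Nat.pow_le_pow_right (by omega) hi)
  · rw [norm_gradient_gdIter_lt_iff P x hθ, norm_gradient_gdIter_lt_iff P x hθ]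
    exact hab i hi

theorem ContinuousOn.lt_zero_iff_of_forall_ne_zero {g : ℝ → ℝ} {a b : ℝ}
    (hg : ContinuousOn g (Set.uIcc a b)) (h : ∀ r ∈ Set.uIcc a b, g r ≠ 0) :
    g a < 0 ↔ g b < 0 := by
  by_contra hab
  obtain ⟨r, hr, hr0⟩ : (0 : ℝ) ∈ g '' Set.uIcc a b := by
    refine intermediate_value_uIcc hg ?_
    rw [Set.mem_uIcc]
    by_cases ha : g a < 0
    · exact Or.inl ⟨ha.le, not_lt.1 fun hb => hab (iff_of_true ha hb)⟩
    · have hb : g b < 0 := by_contra fun hb => hab (iff_of_false ha hb)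
      exact Or.inr ⟨hb.le, not_lt.1 ha⟩
  exact h r hr hr0

/-- The index of the cell containing `η` in the partition of `ℝ` into the points of `R` and the
open intervals between them. -/
noncomputable def cellIndex (R : Finset ℝ) (η : ℝ) : ℕ × Bool :=
  ((R.filter (· < η)).card, decide (η ∈ R))

theorem cellIndex_mem (R : Finset ℝ) (η : ℝ) :
    cellIndex R η ∈ Finset.range (R.card + 1) ×ˢ (Finset.univ : Finset Bool) := by
  simp [cellIndex, Finset.card_filter_le, em]

theorem card_filter_lt_lt_of_le_of_lt {R : Finset ℝ} {a b r : ℝ} (hr : r ∈ R) (har : a ≤ r)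
    (hrb : r < b) : (R.filter (· < a)).card < (R.filter (· < b)).card := by
  refine Finset.card_lt_card ((Finset.ssubset_iff_of_subset ?_).2 ⟨r, ?_, ?_⟩)
  · exact Finset.monotone_filter_right _ fun s _ hs => hs.trans_le (har.trans hrb.le)
  · simp [hr, hrb]
  · simp [har]

theorem eq_of_cellIndex_eq {R : Finset ℝ} {a b r : ℝ} (h : cellIndex R a = cellIndex R b)
    (hr : r ∈ R) (hab : r ∈ Set.uIcc a b) : a = b := by
  wlog hle : a ≤ b generalizing a b
  · exact (this h.symm (Set.uIcc_comm a b ▸ hab) (le_of_not_ge hle)).symm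
  rw [Set.uIcc_of_le hle] at hab
  simp only [cellIndex, Prod.mk.injEq, decide_eq_decide] at h
  by_contra hne
  rcases hab.2.lt_or_eq with hrb | rfl
  · exact (card_filter_lt_lt_of_le_of_lt hr hab.1 hrb).ne h.1
  · exact (card_filter_lt_lt_of_le_of_lt (h.2.2 hr) le_rfl (hle.lt_of_ne hne)).ne h.1

theorem Polynomial.eval_neg_iff_of_cellIndex_eq {g : ℝ[X]} {R : Finset ℝ}
    (hR : g.roots.toFinset ⊆ R) {a b : ℝ} (h : cellIndex R a = cellIndex R b) :
    g.eval a < 0 ↔ g.eval b < 0 := by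
  rcases eq_or_ne g 0 with rfl | hg
  · simp
  by_cases hab : a = b
  · rw [hab]
  refine g.continuous.continuousOn.lt_zero_iff_of_forall_ne_zero fun r hr hr0 => ?_
  exact hab (eq_of_cellIndex_eq h (hR (by simp [hg, hr0])) hr)

theorem Polynomial.card_biUnion_roots_toFinset_le {ι : Type*} (s : Finset ι) (g : ι → ℝ[X]) :
    (s.biUnion fun i => (g i).roots.toFinset).card ≤ ∑ i ∈ s, (g i).natDegree :=
  Finset.card_biUnion_le.trans <| Finset.sum_le_sum fun _ _ =>
    (Multiset.toFinset_card_le _).trans (Polynomial.card_roots' _)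

theorem PseudoShatters.two_pow_card_le {X Θ γ : Type*} {F : Set (X → ℝ)} {S : Finset X}
    (hS : PseudoShatters F S) (φ : Θ → X → ℝ) (hF : F ⊆ Set.range φ) (κ : Θ → γ)
    (U : Finset γ) (hU : ∀ η, κ η ∈ U) (hκ : ∀ a b, κ a = κ b → ∀ z ∈ S, φ a z = φ b z) :
    2 ^ S.card ≤ U.card := by
  classical
  obtain ⟨r, hr⟩ := hS
  have hchoice : ∀ A : Finset X, ∃ η, ∀ z ∈ S, (φ η z > r z ↔ z ∈ A) := by
    intro A
    obtain ⟨f, hf, hfA⟩ := hr (fun z => decide (z ∈ A))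
    obtain ⟨η, rfl⟩ := hF hf
    exact ⟨η, fun z hz => by simpa using hfA z hz⟩
  choose e he using hchoice
  rw [← Finset.card_powerset]
  refine Finset.card_le_card_of_injOn (κ ∘ e) (fun A _ => hU (e A)) fun A hA B hB hAB => ?_
  rw [Finset.coe_powerset, Set.mem_preimage, Set.mem_powerset_iff, Finset.coe_subset] at hA hB
  ext z
  by_cases hz : z ∈ S
  · rw [← he A z hz, ← he B z hz, hκ _ _ hAB z hz]
  · exact iff_of_false (fun h => hz (hA h)) (fun h => hz (hB h))

theorem PseudoShatters.two_pow_card_le_of_signs {X ι : Type*} {F : Set (X → ℝ)} {S : Finset X}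
    (hS : PseudoShatters F S) (φ : ℝ → X → ℝ) (hF : F ⊆ Set.range φ) (t : Finset ι)
    (g : X → ι → ℝ[X])
    (hg : ∀ z ∈ S, ∀ a b, (∀ i ∈ t, ((g z i).eval a < 0 ↔ (g z i).eval b < 0)) → φ a z = φ b z) :
    2 ^ S.card ≤ 2 * (∑ z ∈ S, ∑ i ∈ t, (g z i).natDegree + 1) := by
  classical
  set R := (S ×ˢ t).biUnion fun p => (g p.1 p.2).roots.toFinset
  have hroots : ∀ z ∈ S, ∀ i ∈ t, (g z i).roots.toFinset ⊆ R := fun z hz i hi =>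
    Finset.subset_biUnion_of_mem (fun p => (g p.1 p.2).roots.toFinset) (x := (z, i))
      (Finset.mem_product.2 ⟨hz, hi⟩)
  have hcell := hS.two_pow_card_le φ hF (cellIndex R) _ (cellIndex_mem R) fun a b hab z hz =>
    hg z hz a b fun i hi => Polynomial.eval_neg_iff_of_cellIndex_eq (hroots z hz i hi) hab
  calc 2 ^ S.card ≤ 2 * (R.card + 1) := by simpa [Finset.card_product, mul_comm] using hcell
    _ ≤ _ := by
      gcongr
      exact (Polynomial.card_biUnion_roots_toFinset_le _ _).trans_eq (Finset.sum_product _ _ _)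

theorem le_mul_log_of_two_pow_le {m H Δ : ℕ} (hH : 1 ≤ H) (hΔ : 2 ≤ Δ)
    (h : 2 ^ m ≤ 2 * (m * H * (2 * Δ) ^ H + 1)) :
    (m : ℝ) ≤ 11 * H * Real.log Δ := by
  rcases Nat.eq_zero_or_pos m with rfl | hm
  · simp only [CharP.cast_eq_zero]; positivity
  have hN : 1 ≤ m * H * (2 * Δ) ^ H := Nat.one_le_iff_ne_zero.2 (by positivity)
  have h4 : (2 : ℝ) ^ m ≤ 4 * m * H * (2 * Δ) ^ H := by
    exact_mod_cast (by omega : 2 ^ m ≤ 4 * (m * H * (2 * Δ) ^ H)).trans_eq (by ring)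
  have hlog := Real.log_le_log (by positivity) h4
  rw [Real.log_pow, Real.log_mul (by positivity) (by positivity),
    Real.log_mul (by positivity) (by positivity), Real.log_mul (by positivity) (by positivity),
    Real.log_pow, Real.log_mul (by positivity) (by positivity)] at hlog
  have hlog4 : Real.log 4 = 2 * Real.log 2 := by
    rw [show (4 : ℝ) = 2 ^ 2 by norm_num, Real.log_pow]; norm_num
  -- Absorbs the factor `m`, since `1/4 < log 2`.
  have hlogm : Real.log m ≤ m / 4 - 1 + Real.log 4 := by
    have := Real.log_le_sub_one_of_pos (x := m / 4) (by positivity)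
    rw [Real.log_div (by positivity) (by norm_num)] at this
    linarith
  have hlogH : Real.log H ≤ H - 1 := Real.log_le_sub_one_of_pos (by positivity)
  have hlog2Δ : Real.log 2 ≤ Real.log Δ := Real.log_le_log (by norm_num) (by exact_mod_cast hΔ)
  have hH' : (1 : ℝ) ≤ H := by exact_mod_cast hH
  have := Real.log_two_gt_d9
  have := Real.log_two_lt_d9
  nlinarith [mul_le_mul_of_nonneg_left hlog2Δ (by positivity : (0 : ℝ) ≤ H)]

/-- The pseudo-dimension of the class of gradient-descent cost functions
`{ℓ_η : η ∈ ℝ_{≥0}}`, over instances `(x, f)` with `f` a polynomial of degree at most `Δ`,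
is at most `C · H · log Δ` for a universal constant `C`. -/
theorem gd_poly_stepsize_pdim :
    ∃ C : ℝ, 0 < C ∧
      ∀ (d H Δ : ℕ), 1 ≤ d → 1 ≤ H → 2 ≤ Δ →
      ∀ θ : ℝ, 0 < θ →
      ∀ S : Finset {z : (EuclideanSpace ℝ (Fin d)) × (EuclideanSpace ℝ (Fin d) → ℝ) //
          IsPolyDeg Δ z.2},
        PseudoShatters
          {ℓ | ∃ η : ℝ, 0 ≤ η ∧
            ℓ = fun z : {z : (EuclideanSpace ℝ (Fin d)) × (EuclideanSpace ℝ (Fin d) → ℝ) //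
                IsPolyDeg Δ z.2} => (gdCost H θ z.1.2 z.1.1 η : ℝ)} S →
        (S.card : ℝ) ≤ C * H * Real.log Δ := by
  refine ⟨11, by norm_num, fun d H Δ _ hH hΔ θ hθ S hS => ?_⟩
  choose g hg_deg hg_cost using fun z : {z : (EuclideanSpace ℝ (Fin d)) ×
      (EuclideanSpace ℝ (Fin d) → ℝ) // IsPolyDeg Δ z.2} =>
    z.2.exists_gdCost_eq_of_signs (by omega) z.1.1 H hθ
  have hcount := hS.two_pow_card_le_of_signs (fun η z => (gdCost H θ z.1.2 z.1.1 η : ℝ))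
    (by rintro _ ⟨η, -, rfl⟩; exact ⟨η, rfl⟩) (Finset.range H) g fun z _ a b hab =>
      congrArg Nat.cast (hg_cost z a b fun i hi => hab i (Finset.mem_range.2 hi))
  have hdeg : ∑ z ∈ S, ∑ i ∈ Finset.range H, (g z i).natDegree ≤ S.card * H * (2 * Δ) ^ H :=
    calc _ ≤ ∑ z ∈ S, ∑ i ∈ Finset.range H, (2 * Δ) ^ H := by
          gcongr with z _ i hi
          exact hg_deg z i (Finset.mem_range.1 hi)
      _ = _ := by simp [mul_assoc]
  exact le_mul_log_of_two_pow_le hH hΔ (hcount.trans (by gcongr))
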